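/- arXiv:1705.05734 — 5 statements merged into one kernel-verified Lean document; each statement's English description precedes it below -/
import Mathlib

section
/- Let k be a field and let U, V be k-vector spaces equipped with linear maps b : k → U ⊗ V and d : V ⊗ U → k satisfying the Zorro moves. Then V is finite-dimensional over k (and likewise U is finite-dimensional). -/
/-!
Write `b 1 = ∑ᵢ uᵢ ⊗ vᵢ` as a finite sum. The Zorro moves say that every `v ∈ V` equals
`∑ᵢ d (v ⊗ uᵢ) • vᵢ` and every `u ∈ U` equals `∑ᵢ d (vᵢ ⊗ u) • uᵢ`, so the finitely many
`vᵢ` span `V` and the `uᵢ` span `U`.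
-/

open TensorProduct

theorem Module.Finite.of_forall_sum_smul_eq {R M ι : Type*} [Semiring R] [AddCommMonoid M]
    [Module R M] (s : Finset ι) (w : ι → M) (c : ι → M → R)
    (h : ∀ x, ∑ i ∈ s, c i x • w i = x) : Module.Finite R M :=
  ⟨Submodule.fg_def.2 ⟨w '' s, s.finite_toSet.image w,
    eq_top_iff.2 fun x _ => h x ▸ Submodule.sum_mem _ fun _ hi =>
      Submodule.smul_mem _ _ (Submodule.subset_span (Set.mem_image_of_mem w hi))⟩⟩

section Zorro

variable {R U V : Type*} [CommSemiring R] [AddCommMonoid U] [Module R U]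
  [AddCommMonoid V] [Module R V] (b : R →ₗ[R] U ⊗[R] V) (d : V ⊗[R] U →ₗ[R] R)
  {S : Finset (U × V)}

theorem sum_smul_snd_eq_of_zorroV (hS : b 1 = ∑ p ∈ S, p.1 ⊗ₜ[R] p.2)
    (zorroV :
      (TensorProduct.lid R V).toLinearMap ∘ₗ LinearMap.rTensor V d ∘ₗ
        (TensorProduct.assoc R V U V).symm.toLinearMap ∘ₗ LinearMap.lTensor V b ∘ₗ
        (TensorProduct.rid R V).symm.toLinearMap = LinearMap.id)
    (v : V) : ∑ p ∈ S, d (v ⊗ₜ p.1) • p.2 = v := by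
  simpa [hS, tmul_sum] using LinearMap.congr_fun zorroV v

theorem sum_smul_fst_eq_of_zorroU (hS : b 1 = ∑ p ∈ S, p.1 ⊗ₜ[R] p.2)
    (zorroU :
      (TensorProduct.rid R U).toLinearMap ∘ₗ LinearMap.lTensor U d ∘ₗ
        (TensorProduct.assoc R U V U).toLinearMap ∘ₗ LinearMap.rTensor U b ∘ₗ
        (TensorProduct.lid R U).symm.toLinearMap = LinearMap.id)
    (u : U) : ∑ p ∈ S, d (p.2 ⊗ₜ u) • p.1 = u := by
  simpa [hS, sum_tmul] using LinearMap.congr_fun zorroU u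

end Zorro

/-- If `b : k → U ⊗ V` and `d : V ⊗ U → k` satisfy the Zorro moves,
then `V` (and likewise `U`) is finite-dimensional over `k`. -/
theorem dual_pair_finiteDimensional
    (k U V : Type*) [Field k] [AddCommGroup U] [Module k U]
    [AddCommGroup V] [Module k V]
    (b : k →ₗ[k] U ⊗[k] V) (d : V ⊗[k] U →ₗ[k] k)
    (zorroV :
      (TensorProduct.lid k V).toLinearMap ∘ₗ LinearMap.rTensor V d ∘ₗ
        (TensorProduct.assoc k V U V).symm.toLinearMap ∘ₗ LinearMap.lTensor V b ∘ₗ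
        (TensorProduct.rid k V).symm.toLinearMap = LinearMap.id)
    (zorroU :
      (TensorProduct.rid k U).toLinearMap ∘ₗ LinearMap.lTensor U d ∘ₗ
        (TensorProduct.assoc k U V U).toLinearMap ∘ₗ LinearMap.rTensor U b ∘ₗ
        (TensorProduct.lid k U).symm.toLinearMap = LinearMap.id) :
    FiniteDimensional k V ∧ FiniteDimensional k U := by
  obtain ⟨S, hS⟩ := exists_finset (b 1)
  exact ⟨.of_forall_sum_smul_eq S Prod.snd _ (sum_smul_snd_eq_of_zorroV b d hS zorroV),
    .of_forall_sum_smul_eq S Prod.fst _ (sum_smul_fst_eq_of_zorroU b d hS zorroU)⟩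
end

section
/- Let k be a field and let U, V be k-vector spaces equipped with linear maps b : k → U ⊗ V and d : V ⊗ U → k satisfying the Zorro moves. Then the linear map V → Hom_k(U, k) sending v to the functional u ↦ d(v ⊗ u) is bijective, i.e. V is linearly isomorphic to the dual space U*. -/
/-!
Contracting the copairing `b 1 = ∑ uᵢ ⊗ vᵢ` against a functional `f` on its `U`-leg gives
`∑ f uᵢ • vᵢ ∈ V`. The first Zorro move says this undoes `v ↦ d (v ⊗ ·)`, and the second,
after pairing the result with `u` via `d`, says the other composite is the identity too.
-/

open TensorProduct LinearMap

section Zorro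

variable {R U V : Type*} [CommSemiring R] [AddCommMonoid U] [Module R U]
  [AddCommMonoid V] [Module R V]

noncomputable def copairingEval (b : R →ₗ[R] U ⊗[R] V) (f : U →ₗ[R] R) : V :=
  TensorProduct.lid R V (rTensor V f (b 1))

theorem lid_comp_rTensor_curry (d : V ⊗[R] U →ₗ[R] R) (v : V) :
    (TensorProduct.lid R V).toLinearMap ∘ₗ rTensor V (curry d v) =
      (TensorProduct.lid R V).toLinearMap ∘ₗ rTensor V d ∘ₗ
        (TensorProduct.assoc R V U V).symm.toLinearMap ∘ₗ TensorProduct.mk R V (U ⊗[R] V) v := by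
  ext
  simp

theorem pairing_comp_lid_rTensor (d : V ⊗[R] U →ₗ[R] R) (f : U →ₗ[R] R) (u : U) :
    d ∘ₗ (TensorProduct.mk R V U).flip u ∘ₗ (TensorProduct.lid R V).toLinearMap ∘ₗ rTensor V f =
      f ∘ₗ (TensorProduct.rid R U).toLinearMap ∘ₗ lTensor U d ∘ₗ
        (TensorProduct.assoc R U V U).toLinearMap ∘ₗ (TensorProduct.mk R (U ⊗[R] V) U).flip u := by
  ext
  simp [mul_comm]

theorem copairingEval_curry (b : R →ₗ[R] U ⊗[R] V) (d : V ⊗[R] U →ₗ[R] R)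
    (zorroV :
      (TensorProduct.lid R V).toLinearMap ∘ₗ rTensor V d ∘ₗ
        (TensorProduct.assoc R V U V).symm.toLinearMap ∘ₗ lTensor V b ∘ₗ
        (TensorProduct.rid R V).symm.toLinearMap = LinearMap.id)
    (v : V) : copairingEval b (curry d v) = v := by
  have h := LinearMap.congr_fun zorroV v
  simp only [comp_apply, LinearEquiv.coe_coe, rid_symm_apply, lTensor_tmul, id_apply] at h
  exact (LinearMap.congr_fun (lid_comp_rTensor_curry d v) (b 1)).trans h

theorem curry_copairingEval (b : R →ₗ[R] U ⊗[R] V) (d : V ⊗[R] U →ₗ[R] R)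
    (zorroU :
      (TensorProduct.rid R U).toLinearMap ∘ₗ lTensor U d ∘ₗ
        (TensorProduct.assoc R U V U).toLinearMap ∘ₗ rTensor U b ∘ₗ
        (TensorProduct.lid R U).symm.toLinearMap = LinearMap.id)
    (f : U →ₗ[R] R) : curry d (copairingEval b f) = f := by
  ext u
  have h := LinearMap.congr_fun zorroU u
  simp only [comp_apply, LinearEquiv.coe_coe, lid_symm_apply, rTensor_tmul, id_apply] at h
  simpa only [comp_apply, LinearEquiv.coe_coe, flip_apply, mk_apply, h, curry_apply,
    copairingEval] using
    LinearMap.congr_fun (pairing_comp_lid_rTensor d f u) (b 1)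

end Zorro

/-- If `b : k → U ⊗ V` and `d : V ⊗ U → k` satisfy the Zorro moves,
then the map `V → Hom_k(U, k)`, `v ↦ (u ↦ d (v ⊗ u))`, is bijective, i.e. `V ≅ U*`. -/
theorem dual_pair_iso_dual
    (k U V : Type*) [Field k] [AddCommGroup U] [Module k U]
    [AddCommGroup V] [Module k V]
    (b : k →ₗ[k] U ⊗[k] V) (d : V ⊗[k] U →ₗ[k] k)
    (zorroV :
      (TensorProduct.lid k V).toLinearMap ∘ₗ LinearMap.rTensor V d ∘ₗ
        (TensorProduct.assoc k V U V).symm.toLinearMap ∘ₗ LinearMap.lTensor V b ∘ₗ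
        (TensorProduct.rid k V).symm.toLinearMap = LinearMap.id)
    (zorroU :
      (TensorProduct.rid k U).toLinearMap ∘ₗ LinearMap.lTensor U d ∘ₗ
        (TensorProduct.assoc k U V U).toLinearMap ∘ₗ LinearMap.rTensor U b ∘ₗ
        (TensorProduct.lid k U).symm.toLinearMap = LinearMap.id) :
    Function.Bijective (TensorProduct.curry d) :=
  Function.bijective_iff_has_inverse.mpr
    ⟨copairingEval b, copairingEval_curry b d zorroV, curry_copairingEval b d zorroU⟩
end

section
/- Let k be a field. Let (U, V, b, d) and (U', V', b', d') be dual pairs of k-vector spaces, i.e. b : k → U ⊗ V, d : V ⊗ U → k and b' : k → U' ⊗ V', d' : V' ⊗ U' → k each satisfy the Zorro moves. Suppose f : U → U' and g : V → V' are linear maps such that (f ⊗ g) ∘ b = b' and d' ∘ (g ⊗ f) = d. Then f and g are bijective. -/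
/-!
Write `b 1 = ∑ uᵢ ⊗ vᵢ`. Then `b' 1 = ∑ f uᵢ ⊗ g vᵢ` and `d'(g v ⊗ f u) = d(v ⊗ u)`, so the
Zorro moves of `(b, d)` say that `u' ↦ ∑ d'(g vᵢ ⊗ u') uᵢ` is a left inverse of `f`, and those of
`(b', d')` say that it is a right inverse; symmetrically for `g`.
-/

open TensorProduct

namespace TensorProduct

variable {R U V : Type*} [CommSemiring R]
  [AddCommMonoid U] [Module R U] [AddCommMonoid V] [Module R V]

def zorroV (b : R →ₗ[R] U ⊗[R] V) (d : V ⊗[R] U →ₗ[R] R) : V →ₗ[R] V :=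
  (TensorProduct.lid R V).toLinearMap ∘ₗ LinearMap.rTensor V d ∘ₗ
    (TensorProduct.assoc R V U V).symm.toLinearMap ∘ₗ LinearMap.lTensor V b ∘ₗ
    (TensorProduct.rid R V).symm.toLinearMap

def zorroU (b : R →ₗ[R] U ⊗[R] V) (d : V ⊗[R] U →ₗ[R] R) : U →ₗ[R] U :=
  (TensorProduct.rid R U).toLinearMap ∘ₗ LinearMap.lTensor U d ∘ₗ
    (TensorProduct.assoc R U V U).toLinearMap ∘ₗ LinearMap.rTensor U b ∘ₗ
    (TensorProduct.lid R U).symm.toLinearMap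

variable {ι : Type*} {b : R →ₗ[R] U ⊗[R] V} {s : Finset ι} {u : ι → U} {v : ι → V}

theorem zorroV_apply (d : V ⊗[R] U →ₗ[R] R) (hb : b 1 = ∑ i ∈ s, u i ⊗ₜ[R] v i) (y : V) :
    zorroV b d y = ∑ i ∈ s, d (y ⊗ₜ[R] u i) • v i := by
  simp only [zorroV, LinearMap.comp_apply, LinearEquiv.coe_coe, rid_symm_apply,
    LinearMap.lTensor_tmul, hb, tmul_sum, map_sum, assoc_symm_tmul, LinearMap.rTensor_tmul,
    lid_tmul]

theorem zorroU_apply (d : V ⊗[R] U →ₗ[R] R) (hb : b 1 = ∑ i ∈ s, u i ⊗ₜ[R] v i) (x : U) :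
    zorroU b d x = ∑ i ∈ s, d (v i ⊗ₜ[R] x) • u i := by
  simp only [zorroU, LinearMap.comp_apply, LinearEquiv.coe_coe, lid_symm_apply,
    LinearMap.rTensor_tmul, hb, sum_tmul, map_sum, assoc_tmul, LinearMap.lTensor_tmul,
    rid_tmul]

theorem sum_smul_eq_of_zorroV_eq_id {d : V ⊗[R] U →ₗ[R] R} (hz : zorroV b d = LinearMap.id)
    (hb : b 1 = ∑ i ∈ s, u i ⊗ₜ[R] v i) (y : V) : ∑ i ∈ s, d (y ⊗ₜ[R] u i) • v i = y := by
  rw [← zorroV_apply d hb, hz, LinearMap.id_apply]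

theorem sum_smul_eq_of_zorroU_eq_id {d : V ⊗[R] U →ₗ[R] R} (hz : zorroU b d = LinearMap.id)
    (hb : b 1 = ∑ i ∈ s, u i ⊗ₜ[R] v i) (x : U) : ∑ i ∈ s, d (v i ⊗ₜ[R] x) • u i = x := by
  rw [← zorroU_apply d hb, hz, LinearMap.id_apply]

end TensorProduct

theorem LinearMap.bijective_of_sum_smul_eq {R M N ι : Type*} [Semiring R]
    [AddCommMonoid M] [Module R M] [AddCommMonoid N] [Module R N]
    (f : M →ₗ[R] N) (s : Finset ι) (m : ι → M) (φ : ι → N → R)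
    (h_left : ∀ x, ∑ i ∈ s, φ i (f x) • m i = x) (h_right : ∀ y, ∑ i ∈ s, φ i y • f (m i) = y) :
    Function.Bijective f := by
  refine Function.bijective_iff_has_inverse.mpr ⟨fun y => ∑ i ∈ s, φ i y • m i, h_left, ?_⟩
  intro y
  simpa only [map_sum, map_smul] using h_right y

/-- A morphism `(f, g)` between dual pairs `(U, V, b, d)` and
`(U', V', b', d')` (i.e. `(f ⊗ g) ∘ b = b'` and `d' ∘ (g ⊗ f) = d`)
is automatically invertible: `f` and `g` are bijective. -/
theorem dual_pair_morphism_bijective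
    (k U V U' V' : Type*) [Field k]
    [AddCommGroup U] [Module k U] [AddCommGroup V] [Module k V]
    [AddCommGroup U'] [Module k U'] [AddCommGroup V'] [Module k V']
    (b : k →ₗ[k] U ⊗[k] V) (d : V ⊗[k] U →ₗ[k] k)
    (b' : k →ₗ[k] U' ⊗[k] V') (d' : V' ⊗[k] U' →ₗ[k] k)
    (zorroV :
      (TensorProduct.lid k V).toLinearMap ∘ₗ LinearMap.rTensor V d ∘ₗ
        (TensorProduct.assoc k V U V).symm.toLinearMap ∘ₗ LinearMap.lTensor V b ∘ₗ
        (TensorProduct.rid k V).symm.toLinearMap = LinearMap.id)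
    (zorroU :
      (TensorProduct.rid k U).toLinearMap ∘ₗ LinearMap.lTensor U d ∘ₗ
        (TensorProduct.assoc k U V U).toLinearMap ∘ₗ LinearMap.rTensor U b ∘ₗ
        (TensorProduct.lid k U).symm.toLinearMap = LinearMap.id)
    (zorroV' :
      (TensorProduct.lid k V').toLinearMap ∘ₗ LinearMap.rTensor V' d' ∘ₗ
        (TensorProduct.assoc k V' U' V').symm.toLinearMap ∘ₗ LinearMap.lTensor V' b' ∘ₗ
        (TensorProduct.rid k V').symm.toLinearMap = LinearMap.id)
    (zorroU' :
      (TensorProduct.rid k U').toLinearMap ∘ₗ LinearMap.lTensor U' d' ∘ₗ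
        (TensorProduct.assoc k U' V' U').toLinearMap ∘ₗ LinearMap.rTensor U' b' ∘ₗ
        (TensorProduct.lid k U').symm.toLinearMap = LinearMap.id)
    (f : U →ₗ[k] U') (g : V →ₗ[k] V')
    (hb : TensorProduct.map f g ∘ₗ b = b')
    (hd : d' ∘ₗ TensorProduct.map g f = d) :
    Function.Bijective f ∧ Function.Bijective g := by
  obtain ⟨s, hs⟩ := TensorProduct.exists_finset (b 1)
  have hs' : b' 1 = ∑ p ∈ s, f p.1 ⊗ₜ[k] g p.2 := by
    simp only [← hb, LinearMap.comp_apply, hs, map_sum, map_tmul]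
  have hd' (y : V) (x : U) : d' (g y ⊗ₜ[k] f x) = d (y ⊗ₜ[k] x) := by
    rw [← hd, LinearMap.comp_apply, map_tmul]
  constructor
  · refine LinearMap.bijective_of_sum_smul_eq f s Prod.fst (fun p x' => d' (g p.2 ⊗ₜ x'))
      (fun x => ?_) (fun x' => ?_)
    · simpa only [hd'] using sum_smul_eq_of_zorroU_eq_id zorroU hs x
    · exact sum_smul_eq_of_zorroU_eq_id zorroU' hs' x'
  · refine LinearMap.bijective_of_sum_smul_eq g s Prod.snd (fun p y' => d' (y' ⊗ₜ f p.1))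
      (fun y => ?_) (fun y' => ?_)
    · simpa only [hd'] using sum_smul_eq_of_zorroV_eq_id zorroV hs y
    · exact sum_smul_eq_of_zorroV_eq_id zorroV' hs' y'
end

section
/- Let A be a Frobenius algebra over a field k in the full sense, with multiplication μ, coproduct Δ and counit ε. Then A is finite-dimensional as a k-vector space. -/
/-!
The Frobenius condition gives `Δ a = Δ (a · 1) = ∑ a xᵢ ⊗ yᵢ`, where `Δ 1 = ∑ xᵢ ⊗ yᵢ`.
Applying the counit then yields `a = ∑ ε (a xᵢ) yᵢ`, so the finitely many `yᵢ` span `A`.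
-/

open TensorProduct

namespace TensorProduct

variable {R M N : Type*} [CommRing R] [AddCommGroup M] [Module R M] [AddCommGroup N] [Module R N]

theorem exists_finite_submodule_forall_lid_rTensor_mem (x : M ⊗[R] N) :
    ∃ N' : Submodule R N, Module.Finite R N' ∧
      ∀ f : M →ₗ[R] R, TensorProduct.lid R N (f.rTensor N x) ∈ N' := by
  obtain ⟨N', hfin, hx⟩ :=
    exists_finite_submodule_right_of_setFinite {x} (Set.finite_singleton x)
  obtain ⟨y, rfl⟩ := hx rfl
  refine ⟨N', hfin, fun f => ?_⟩
  have hcomm : TensorProduct.lid R N ∘ₗ f.rTensor N ∘ₗ N'.subtype.lTensor M =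
      N'.subtype ∘ₗ TensorProduct.lid R N' ∘ₗ f.rTensor N' :=
    TensorProduct.ext' fun m n => by simp
  exact congr($hcomm y) ▸ Submodule.coe_mem _

end TensorProduct

section Frobenius

variable {R A : Type*} [CommRing R] [Ring A] [Algebra R A] (Δ : A →ₗ[R] A ⊗[R] A)

theorem comul_eq_rTensor_mulLeft_comul_one
    (frob_left :
      LinearMap.rTensor A (LinearMap.mul' R A) ∘ₗ
          (TensorProduct.assoc R A A A).symm.toLinearMap ∘ₗ LinearMap.lTensor A Δ =
        Δ ∘ₗ LinearMap.mul' R A)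
    (a : A) :
    Δ a = (LinearMap.mulLeft R a).rTensor A (Δ 1) := by
  have hmul : (LinearMap.mul' R A).rTensor A ∘ₗ (TensorProduct.assoc R A A A).symm.toLinearMap ∘ₗ
      TensorProduct.mk R A (A ⊗[R] A) a = (LinearMap.mulLeft R a).rTensor A :=
    TensorProduct.ext' fun x y => by simp
  simpa [mul_one] using (congr($frob_left (a ⊗ₜ 1))).symm.trans congr($hmul (Δ 1))

theorem eq_lid_rTensor_comul_one (ε : A →ₗ[R] R)
    (counit_left :
      (TensorProduct.lid R A).toLinearMap ∘ₗ LinearMap.rTensor A ε ∘ₗ Δ = LinearMap.id)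
    (frob_left :
      LinearMap.rTensor A (LinearMap.mul' R A) ∘ₗ
          (TensorProduct.assoc R A A A).symm.toLinearMap ∘ₗ LinearMap.lTensor A Δ =
        Δ ∘ₗ LinearMap.mul' R A)
    (a : A) :
    a = TensorProduct.lid R A ((ε ∘ₗ LinearMap.mulLeft R a).rTensor A (Δ 1)) := by
  conv_lhs => rw [← LinearMap.id_apply (R := R) a, ← counit_left]
  simp [comul_eq_rTensor_mulLeft_comul_one Δ frob_left a, LinearMap.rTensor_comp_apply]

end Frobenius

theorem frobenius_finiteDimensional_general
    (k A : Type*) [Field k] [Ring A] [Algebra k A]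
    (Δ : A →ₗ[k] A ⊗[k] A) (ε : A →ₗ[k] k)
    (counit_left :
      (TensorProduct.lid k A).toLinearMap ∘ₗ LinearMap.rTensor A ε ∘ₗ Δ = LinearMap.id)
    (frob_left :
      LinearMap.rTensor A (LinearMap.mul' k A) ∘ₗ
          (TensorProduct.assoc k A A A).symm.toLinearMap ∘ₗ LinearMap.lTensor A Δ =
        Δ ∘ₗ LinearMap.mul' k A) :
    FiniteDimensional k A := by
  obtain ⟨N, hN, hmem⟩ := TensorProduct.exists_finite_submodule_forall_lid_rTensor_mem (Δ 1)
  have htop : N = ⊤ := eq_top_iff.mpr fun a _ =>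
    eq_lid_rTensor_comul_one Δ ε counit_left frob_left a ▸ hmem _
  exact Module.Finite.equiv (LinearEquiv.ofTop N htop)

/-- A Frobenius algebra `(A, μ, Δ, ε)` (full definition) over a field
is finite-dimensional. -/
theorem frobenius_finiteDimensional
    (k A : Type*) [Field k] [Ring A] [Algebra k A]
    (Δ : A →ₗ[k] A ⊗[k] A) (ε : A →ₗ[k] k)
    (coassoc :
      (TensorProduct.assoc k A A A).toLinearMap ∘ₗ LinearMap.rTensor A Δ ∘ₗ Δ =
        LinearMap.lTensor A Δ ∘ₗ Δ)
    (counit_left :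
      (TensorProduct.lid k A).toLinearMap ∘ₗ LinearMap.rTensor A ε ∘ₗ Δ = LinearMap.id)
    (counit_right :
      (TensorProduct.rid k A).toLinearMap ∘ₗ LinearMap.lTensor A ε ∘ₗ Δ = LinearMap.id)
    (frob_left :
      LinearMap.rTensor A (LinearMap.mul' k A) ∘ₗ
          (TensorProduct.assoc k A A A).symm.toLinearMap ∘ₗ LinearMap.lTensor A Δ =
        Δ ∘ₗ LinearMap.mul' k A)
    (frob_right :
      LinearMap.lTensor A (LinearMap.mul' k A) ∘ₗ
          (TensorProduct.assoc k A A A).toLinearMap ∘ₗ LinearMap.rTensor A Δ =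
        Δ ∘ₗ LinearMap.mul' k A) :
    FiniteDimensional k A :=
  frobenius_finiteDimensional_general k A Δ ε counit_left frob_left
end

section
/- Let k be a field and let A be a finite-dimensional unital associative k-algebra equipped with a bilinear form ⟨-,-⟩ : A × A → k which is invariant (⟨a · b, c⟩ = ⟨a, b · c⟩ for all a, b, c ∈ A) and nondegenerate. Then there exist linear maps Δ : A → A ⊗ A and ε : A → k with ε(a) = ⟨a, 1⟩ for all a, such that (A, μ, Δ, ε) is a Frobenius algebra in the full sense, i.e. Δ is coassociative, ε is a counit for Δ, and the Frobenius condition (μ ⊗ id) ∘ (id ⊗ Δ) = Δ ∘ μ = (id ⊗ μ) ∘ (Δ ⊗ id) holds. -/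
/-!
Pick a basis `(xᵢ)` of `A` and its `B`-dual basis `(yᵢ)`, so that
`a = ∑ B(a, xᵢ) yᵢ = ∑ B(yᵢ, a) xᵢ`. Invariance of `B` then makes the Casimir element
`∑ xᵢ ⊗ yᵢ` commute with `A`: `∑ a xᵢ ⊗ yᵢ = ∑ xᵢ ⊗ yᵢ a`. Hence `Δ a = ∑ a xᵢ ⊗ yᵢ` is a map
of `A`-bimodules, which is the Frobenius condition and implies coassociativity, and the two
expansions of `a` are the counit laws for `ε = B(-, 1)`.
-/

open TensorProduct

namespace LinearMap.BilinForm

variable {K V ι : Type*} [Field K] [AddCommGroup V] [Module K V]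

theorem SeparatingRight.separatingLeft [FiniteDimensional K V] {B : LinearMap.BilinForm K V}
    (hB : B.SeparatingRight) : B.SeparatingLeft := by
  have hinj : Function.Injective B.flip :=
    LinearMap.ker_eq_bot.mp (LinearMap.separatingRight_iff_flip_ker_eq_bot.mp hB)
  have hsurj : Function.Surjective B.flip :=
    (LinearMap.injective_iff_surjective_of_finrank_eq_finrank
      Subspace.dual_finrank_eq.symm).mp hinj
  intro v hv
  refine (Module.forall_dual_apply_eq_zero_iff K v).mp fun φ => ?_
  obtain ⟨w, rfl⟩ := hsurj φ
  exact hv w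

variable [DecidableEq ι] [Fintype ι]

theorem sum_apply_smul_dualBasis (B : LinearMap.BilinForm K V) (hB : B.Nondegenerate)
    (b : Module.Basis ι K V) (v : V) : ∑ i, B v (b i) • B.dualBasis hB b i = v := by
  simpa only [dualBasis_repr_apply] using (B.dualBasis hB b).sum_repr v

theorem sum_dualBasis_apply_smul (B : LinearMap.BilinForm K V) (hB : B.Nondegenerate)
    (b : Module.Basis ι K V) (v : V) : ∑ i, B (B.dualBasis hB b i) v • b i = v := by
  have h := (B.flip.dualBasis hB.flip (B.dualBasis hB b)).sum_repr v
  simp only [dualBasis_repr_apply, flip_apply] at h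
  rwa [dualBasis_flip_dualBasis] at h

end LinearMap.BilinForm

section CasimirCoproduct

variable {k A ι : Type*} [CommSemiring k] [Semiring A] [Algebra k A] [Fintype ι] {x y : ι → A}

def casimirCoproduct (x y : ι → A) : A →ₗ[k] A ⊗[k] A :=
  ∑ i, (TensorProduct.mk k A A).flip (y i) ∘ₗ LinearMap.mulRight k (x i)

theorem casimirCoproduct_apply (x y : ι → A) (a : A) :
    casimirCoproduct (k := k) x y a = ∑ i, (a * x i) ⊗ₜ[k] y i := by
  simp [casimirCoproduct, LinearMap.sum_apply]

theorem sum_mul_tmul_eq_sum_tmul_mul (B : A →ₗ[k] A →ₗ[k] k)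
    (hinv : ∀ a b c : A, B (a * b) c = B a (b * c))
    (hx : ∀ a, ∑ i, B a (x i) • y i = a) (hy : ∀ a, ∑ i, B (y i) a • x i = a) (a : A) :
    ∑ i, (a * x i) ⊗ₜ[k] y i = ∑ i, x i ⊗ₜ[k] (y i * a) :=
  calc ∑ i, (a * x i) ⊗ₜ[k] y i
      = ∑ i, ∑ j, B (y j * a) (x i) • x j ⊗ₜ[k] y i := by
        refine Finset.sum_congr rfl fun i _ => ?_
        conv_lhs => rw [← hy (a * x i)]
        simp only [sum_tmul, hinv, smul_tmul']
    _ = ∑ j, ∑ i, B (y j * a) (x i) • x j ⊗ₜ[k] y i := Finset.sum_comm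
    _ = ∑ j, x j ⊗ₜ[k] (y j * a) := by
        refine Finset.sum_congr rfl fun j _ => ?_
        conv_rhs => rw [← hx (y j * a)]
        simp only [tmul_sum, tmul_smul]

theorem casimirCoproduct_coassoc
    (hbal : ∀ a, ∑ i, (a * x i) ⊗ₜ[k] y i = ∑ i, x i ⊗ₜ[k] (y i * a)) :
    (TensorProduct.assoc k A A A).toLinearMap ∘ₗ
        (casimirCoproduct x y).rTensor A ∘ₗ casimirCoproduct x y =
      (casimirCoproduct x y).lTensor A ∘ₗ casimirCoproduct (k := k) x y := by
  ext a
  have lhs : TensorProduct.assoc k A A A ((casimirCoproduct x y).rTensor A (casimirCoproduct x y a))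
      = ∑ i, ∑ j, x j ⊗ₜ[k] ((y j * (a * x i)) ⊗ₜ[k] y i) := by
    simp only [casimirCoproduct_apply x y a, map_sum, LinearMap.rTensor_tmul]
    simp only [casimirCoproduct_apply, hbal, sum_tmul, map_sum, assoc_tmul]
  have rhs : (casimirCoproduct x y).lTensor A (casimirCoproduct (k := k) x y a)
      = ∑ j, ∑ i, x j ⊗ₜ[k] ((y j * a * x i) ⊗ₜ[k] y i) := by
    simp only [casimirCoproduct_apply x y a, hbal, map_sum, LinearMap.lTensor_tmul]
    simp only [casimirCoproduct_apply, tmul_sum]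
  simp only [LinearMap.comp_apply, LinearEquiv.coe_coe, lhs, rhs, mul_assoc]
  exact Finset.sum_comm

theorem casimirCoproduct_frobenius_left :
    (LinearMap.mul' k A).rTensor A ∘ₗ (TensorProduct.assoc k A A A).symm.toLinearMap ∘ₗ
        (casimirCoproduct x y).lTensor A =
      casimirCoproduct x y ∘ₗ LinearMap.mul' k A := by
  refine TensorProduct.ext' fun a c => ?_
  simp only [LinearMap.comp_apply, LinearEquiv.coe_coe, LinearMap.lTensor_tmul,
    casimirCoproduct_apply, tmul_sum, map_sum, assoc_symm_tmul, LinearMap.rTensor_tmul,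
    LinearMap.mul'_apply, mul_assoc]

theorem casimirCoproduct_frobenius_right
    (hbal : ∀ a, ∑ i, (a * x i) ⊗ₜ[k] y i = ∑ i, x i ⊗ₜ[k] (y i * a)) :
    (LinearMap.mul' k A).lTensor A ∘ₗ (TensorProduct.assoc k A A A).toLinearMap ∘ₗ
        (casimirCoproduct x y).rTensor A =
      casimirCoproduct x y ∘ₗ LinearMap.mul' k A := by
  refine TensorProduct.ext' fun a c => ?_
  simp only [LinearMap.comp_apply, LinearEquiv.coe_coe, LinearMap.rTensor_tmul,
    LinearMap.mul'_apply, casimirCoproduct_apply]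
  rw [hbal, hbal, sum_tmul, map_sum, map_sum]
  simp only [assoc_tmul, LinearMap.lTensor_tmul, LinearMap.mul'_apply, mul_assoc]

theorem lid_comp_rTensor_comp_casimirCoproduct (B : A →ₗ[k] A →ₗ[k] k)
    (hinv : ∀ a b c : A, B (a * b) c = B a (b * c)) (hx : ∀ a, ∑ i, B a (x i) • y i = a) :
    (TensorProduct.lid k A).toLinearMap ∘ₗ (B.flip 1).rTensor A ∘ₗ casimirCoproduct x y =
      LinearMap.id := by
  ext a
  simp only [LinearMap.comp_apply, LinearEquiv.coe_coe, LinearMap.id_apply,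
    casimirCoproduct_apply, map_sum, LinearMap.rTensor_tmul, LinearMap.flip_apply, lid_tmul,
    hinv, mul_one, hx]

theorem rid_comp_lTensor_comp_casimirCoproduct (B : A →ₗ[k] A →ₗ[k] k)
    (hinv : ∀ a b c : A, B (a * b) c = B a (b * c)) (hy : ∀ a, ∑ i, B (y i) a • x i = a)
    (hbal : ∀ a, ∑ i, (a * x i) ⊗ₜ[k] y i = ∑ i, x i ⊗ₜ[k] (y i * a)) :
    (TensorProduct.rid k A).toLinearMap ∘ₗ (B.flip 1).lTensor A ∘ₗ casimirCoproduct x y =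
      LinearMap.id := by
  ext a
  simp only [LinearMap.comp_apply, LinearEquiv.coe_coe, LinearMap.id_apply,
    casimirCoproduct_apply, hbal, map_sum, LinearMap.lTensor_tmul, LinearMap.flip_apply, rid_tmul,
    hinv, mul_one, hy]

end CasimirCoproduct

theorem frobenius_of_invariant_nondegenerate_pairing_general
    (k A : Type*) [Field k] [Ring A] [Algebra k A] [FiniteDimensional k A]
    (B : A →ₗ[k] A →ₗ[k] k)
    (hinv : ∀ a b c : A, B (a * b) c = B a (b * c))
    (hnd_right : ∀ b : A, (∀ a : A, B a b = 0) → b = 0) :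
    ∃ (Δ : A →ₗ[k] A ⊗[k] A) (ε : A →ₗ[k] k),
      (∀ a : A, ε a = B a 1) ∧
      ((TensorProduct.assoc k A A A).toLinearMap ∘ₗ LinearMap.rTensor A Δ ∘ₗ Δ =
        LinearMap.lTensor A Δ ∘ₗ Δ) ∧
      ((TensorProduct.lid k A).toLinearMap ∘ₗ LinearMap.rTensor A ε ∘ₗ Δ = LinearMap.id) ∧
      ((TensorProduct.rid k A).toLinearMap ∘ₗ LinearMap.lTensor A ε ∘ₗ Δ = LinearMap.id) ∧
      (LinearMap.rTensor A (LinearMap.mul' k A) ∘ₗ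
          (TensorProduct.assoc k A A A).symm.toLinearMap ∘ₗ LinearMap.lTensor A Δ =
        Δ ∘ₗ LinearMap.mul' k A) ∧
      (LinearMap.lTensor A (LinearMap.mul' k A) ∘ₗ
          (TensorProduct.assoc k A A A).toLinearMap ∘ₗ LinearMap.rTensor A Δ =
        Δ ∘ₗ LinearMap.mul' k A) := by
  have hB : B.Nondegenerate :=
    ⟨LinearMap.BilinForm.SeparatingRight.separatingLeft hnd_right, hnd_right⟩
  let b := Module.finBasis k A
  have hx := LinearMap.BilinForm.sum_apply_smul_dualBasis B hB b
  have hy := LinearMap.BilinForm.sum_dualBasis_apply_smul B hB b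
  have hbal := sum_mul_tmul_eq_sum_tmul_mul B hinv hx hy
  exact ⟨casimirCoproduct b (LinearMap.BilinForm.dualBasis B hB b), B.flip 1, fun _ => rfl,
    casimirCoproduct_coassoc hbal, lid_comp_rTensor_comp_casimirCoproduct B hinv hx,
    rid_comp_lTensor_comp_casimirCoproduct B hinv hy hbal, casimirCoproduct_frobenius_left,
    casimirCoproduct_frobenius_right hbal⟩

/-- (Economy implies full.)  A finite-dimensional unital associative
`k`-algebra `A` with an invariant nondegenerate bilinear form `B` admits a coproduct
`Δ` and a counit `ε` (with `ε a = B a 1`) making `(A, μ, Δ, ε)` a Frobenius algebra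
in the full sense. -/
theorem frobenius_of_invariant_nondegenerate_pairing
    (k A : Type*) [Field k] [Ring A] [Algebra k A] [FiniteDimensional k A]
    (B : A →ₗ[k] A →ₗ[k] k)
    (hinv : ∀ a b c : A, B (a * b) c = B a (b * c))
    (hnd_left : ∀ a : A, (∀ b : A, B a b = 0) → a = 0)
    (hnd_right : ∀ b : A, (∀ a : A, B a b = 0) → b = 0) :
    ∃ (Δ : A →ₗ[k] A ⊗[k] A) (ε : A →ₗ[k] k),
      (∀ a : A, ε a = B a 1) ∧
      ((TensorProduct.assoc k A A A).toLinearMap ∘ₗ LinearMap.rTensor A Δ ∘ₗ Δ =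
        LinearMap.lTensor A Δ ∘ₗ Δ) ∧
      ((TensorProduct.lid k A).toLinearMap ∘ₗ LinearMap.rTensor A ε ∘ₗ Δ = LinearMap.id) ∧
      ((TensorProduct.rid k A).toLinearMap ∘ₗ LinearMap.lTensor A ε ∘ₗ Δ = LinearMap.id) ∧
      (LinearMap.rTensor A (LinearMap.mul' k A) ∘ₗ
          (TensorProduct.assoc k A A A).symm.toLinearMap ∘ₗ LinearMap.lTensor A Δ =
        Δ ∘ₗ LinearMap.mul' k A) ∧
      (LinearMap.lTensor A (LinearMap.mul' k A) ∘ₗ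
          (TensorProduct.assoc k A A A).toLinearMap ∘ₗ LinearMap.rTensor A Δ =
        Δ ∘ₗ LinearMap.mul' k A) :=
  frobenius_of_invariant_nondegenerate_pairing_general k A B hinv hnd_right
end
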